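/- arXiv:2012.10818 — 3 statements merged into one kernel-verified Lean document; each statement's English description precedes it below -/
import Mathlib

section
/- For every z ∈ ℂ \ {0, -1/λ} (with λ = e^{2πiθ}), the second iterate f_α∘f_α(z) converges to g_∞(z) := λ(z+z²)/(1+λz) as α → ∞, and for every z ∈ ℂ \ {0, -1} it converges to g₀(z) := (z+z²)/(1+λz) as α → 0; moreover the convergence as α → ∞ is locally uniform on compact subsets of ℂ \ {-1/λ} (away from the poles). -/
open Complex Filter Topology

/-! For `α ≠ 0` the second iterate `f_α ∘ f_α` equals the paper's rational expression
`(z + z²)/(1 + λz) · (z + z² + αλ(1 + λz))/(z + z² + α(1 + λz))` at every `z`, degenerate points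
included, because inversion in a field is multiplicative even at `0`. As `α → 0` the second factor
tends to `1` wherever `z + z² ≠ 0`. As `α → ∞`, substitute `w = α⁻¹`: the expression becomes a
function of `(w, z)` that is jointly continuous at each `(0, z)` with `1 + λz ≠ 0` and equals `g_∞`
at `w = 0`, and joint continuity at `w = 0` is exactly locally uniform convergence in `z`. -/

section UniformConvergence

variable {ι κ α β : Type*} [TopologicalSpace α] [UniformSpace β]

theorem TendstoLocallyUniformlyOn.comp_tendsto {F : ι → α → β} {f : α → β} {p : Filter ι}
    {s : Set α} (hF : TendstoLocallyUniformlyOn F f p s) {φ : κ → ι} {q : Filter κ}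
    (hφ : Tendsto φ q p) : TendstoLocallyUniformlyOn (fun n => F (φ n)) f q s := by
  intro u hu x hx
  obtain ⟨t, ht, hev⟩ := hF u hu x hx
  exact ⟨t, ht, hφ.eventually hev⟩

theorem tendstoLocallyUniformlyOn_nhds_of_continuousAt_uncurry [TopologicalSpace ι]
    {F : ι → α → β} {i₀ : ι} {s : Set α} (hF : ∀ x ∈ s, ContinuousAt ↿F (i₀, x)) :
    TendstoLocallyUniformlyOn F (F i₀) (𝓝 i₀) s := by
  refine tendstoLocallyUniformlyOn_iff_filter.mpr fun x hx => ?_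
  have hlim : Tendsto ↿F (𝓝 i₀ ×ˢ 𝓝 x) (𝓝 (F i₀ x)) := by
    rw [← nhds_prod_eq]
    exact hF x hx
  have hcont : ContinuousAt (F i₀) x :=
    ContinuousAt.comp (f := fun y => (i₀, y)) (hF x hx) (by fun_prop)
  have hlim₀ : Tendsto (fun q : ι × α => F i₀ q.2) (𝓝 i₀ ×ˢ 𝓝 x) (𝓝 (F i₀ x)) :=
    hcont.tendsto.comp tendsto_snd
  exact ((hlim₀.prodMk_nhds hlim).mono_right (nhds_le_uniformity _)).mono_left
    (prod_mono le_rfl nhdsWithin_le_nhds)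

end UniformConvergence

section RationalMap

variable {K : Type*} [Field K] (lam : K)

def rationalMap (α z : K) : K := α * (1 + lam * z) / (z + z ^ 2)

def secondIterate (α z : K) : K :=
  (z + z ^ 2) / (1 + lam * z) *
    ((z + z ^ 2 + α * lam * (1 + lam * z)) / (z + z ^ 2 + α * (1 + lam * z)))

def secondIterateInv (w z : K) : K :=
  (z + z ^ 2) / (1 + lam * z) *
    (((z + z ^ 2) * w + lam * (1 + lam * z)) / ((z + z ^ 2) * w + (1 + lam * z)))

variable {lam}

theorem rationalMap_rationalMap {α : K} (hα : α ≠ 0) (z : K) :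
    rationalMap lam α (rationalMap lam α z) = secondIterate lam α z := by
  unfold rationalMap secondIterate
  set A := 1 + lam * z
  set B := z + z ^ 2
  by_cases hB : B = 0
  · simp [hB]
  have hnum : 1 + lam * (α * A / B) = (B + α * lam * A) / B := by field_simp
  have hden : α * A / B + (α * A / B) ^ 2 = α * (A * (B + α * A)) / B ^ 2 := by field_simp
  rw [hnum, hden]
  simp only [div_eq_mul_inv, mul_inv, inv_inv]
  field_simp

theorem secondIterate_eq_secondIterateInv {α : K} (hα : α ≠ 0) (z : K) :
    secondIterate lam α z = secondIterateInv lam α⁻¹ z := by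
  unfold secondIterate secondIterateInv
  congr 1
  rw [← mul_div_mul_left _ _ (inv_ne_zero hα)]
  congr 1 <;> field_simp

theorem secondIterateInv_zero (z : K) :
    secondIterateInv lam 0 z = lam * (z + z ^ 2) / (1 + lam * z) := by
  unfold secondIterateInv
  by_cases hA : 1 + lam * z = 0
  · simp [hA]
  · simp only [mul_zero, zero_add]
    field_simp

theorem one_add_mul_ne_zero_of_ne_neg_inv {z : K} (hz : z ≠ -lam⁻¹) : 1 + lam * z ≠ 0 := by
  intro h
  have hlam : lam ≠ 0 := by rintro rfl; simp at h
  exact hz (by field_simp; linear_combination h)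

variable [TopologicalSpace K] [IsTopologicalDivisionRing K]

theorem continuousAt_secondIterate_zero {z : K} (hB : z + z ^ 2 ≠ 0) :
    ContinuousAt (fun α => secondIterate lam α z) 0 := by
  unfold secondIterate
  fun_prop (disch := simpa using hB)

theorem continuousAt_secondIterateInv_zero {z : K} (hA : 1 + lam * z ≠ 0) :
    ContinuousAt ↿(secondIterateInv lam) (0, z) := by
  change ContinuousAt (fun p : K × K => secondIterateInv lam p.1 p.2) (0, z)
  unfold secondIterateInv
  fun_prop (disch := simpa using hA)

end RationalMap

theorem stmt4_general (lam : ℂ)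
    (f : ℂ → ℂ → ℂ) (hf : ∀ α z, f α z = α * (1 + lam * z) / (z + z ^ 2))
    (ginf g0 : ℂ → ℂ)
    (hginf : ∀ z, ginf z = lam * (z + z ^ 2) / (1 + lam * z))
    (hg0 : ∀ z, g0 z = (z + z ^ 2) / (1 + lam * z)) :
    (∀ z : ℂ, z ≠ 0 → z ≠ -lam⁻¹ →
      Tendsto (fun α => f α (f α z)) (Bornology.cobounded ℂ) (𝓝 (ginf z))) ∧
    (∀ z : ℂ, z ≠ 0 → z ≠ -1 →
      Tendsto (fun α => f α (f α z)) (𝓝[≠] (0 : ℂ)) (𝓝 (g0 z))) ∧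
    TendstoLocallyUniformlyOn (fun α z => f α (f α z)) ginf
      (Bornology.cobounded ℂ) {z : ℂ | z ≠ -lam⁻¹} := by
  obtain rfl : f = rationalMap lam := funext₂ hf
  obtain rfl : ginf = fun z => secondIterateInv lam 0 z := funext fun z => by
    rw [hginf, secondIterateInv_zero]
  have hunif : TendstoLocallyUniformlyOn (fun α z => rationalMap lam α (rationalMap lam α z))
      (secondIterateInv lam 0) (Bornology.cobounded ℂ) {z : ℂ | z ≠ -lam⁻¹} := by
    refine ((tendstoLocallyUniformlyOn_nhds_of_continuousAt_uncurry fun z hz =>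
      continuousAt_secondIterateInv_zero (one_add_mul_ne_zero_of_ne_neg_inv hz)).comp_tendsto
        tendsto_inv₀_cobounded).congr_inseparable ?_
    filter_upwards [Bornology.eventually_ne_cobounded 0] with α hα z _
    rw [rationalMap_rationalMap hα, secondIterate_eq_secondIterateInv hα]
  refine ⟨fun z _ hz => hunif.tendsto_at hz, fun z hz₀ hz₁ => ?_, hunif⟩
  have hB : z + z ^ 2 ≠ 0 := by
    rw [show z + z ^ 2 = z * (1 + z) by ring]
    exact mul_ne_zero hz₀ fun h => hz₁ (by linear_combination h)
  have hlim := (continuousAt_secondIterate_zero (lam := lam) hB).tendsto.mono_left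
    (nhdsWithin_le_nhds (s := {0}ᶜ))
  rw [show secondIterate lam 0 z = g0 z by simp [secondIterate, hg0, hB]] at hlim
  refine hlim.congr' ?_
  filter_upwards [self_mem_nhdsWithin] with α hα
  exact (rationalMap_rationalMap hα z).symm

theorem stmt4 (θ : ℝ) (hθ : Irrational θ) (lam : ℂ)
    (hlam : lam = Complex.exp (2 * Real.pi * Complex.I * θ))
    (f : ℂ → ℂ → ℂ) (hf : ∀ α z, f α z = α * (1 + lam * z) / (z + z ^ 2))
    (ginf g0 : ℂ → ℂ)
    (hginf : ∀ z, ginf z = lam * (z + z ^ 2) / (1 + lam * z))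
    (hg0 : ∀ z, g0 z = (z + z ^ 2) / (1 + lam * z)) :
    (∀ z : ℂ, z ≠ 0 → z ≠ -lam⁻¹ →
      Tendsto (fun α => f α (f α z)) (Bornology.cobounded ℂ) (𝓝 (ginf z))) ∧
    (∀ z : ℂ, z ≠ 0 → z ≠ -1 →
      Tendsto (fun α => f α (f α z)) (𝓝[≠] (0 : ℂ)) (𝓝 (g0 z))) ∧
    TendstoLocallyUniformlyOn (fun α z => f α (f α z)) ginf
      (Bornology.cobounded ℂ) {z : ℂ | z ≠ -lam⁻¹} :=
  stmt4_general lam f hf ginf g0 hginf hg0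
end

section
/- Let λ ∈ ℂ with |λ| = 1 and 1 < |λ-1| ≤ 2. Define g̃(ζ) = ζ + 1 - 1/(1+(λ-1)ζ). If Re ζ > 2, then Re g̃(ζ) > Re ζ. In particular the right half-plane {Re ζ > 2} is forward invariant under g̃ and Re g̃ⁿ(ζ) → ∞ for every ζ with Re ζ > 2. -/
open Complex Filter Topology

/-!
Put `w = 1 + (λ - 1) ζ`. Since `|λ - 1| ≥ 1`, `|w| ≥ |ζ| - 1 ≥ Re ζ - 1`, so
`Re g̃(ζ) ≥ Re ζ + 1 - 1 / (Re ζ - 1)`. The increment `1 - 1 / (t - 1)` is positive and increasing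
for `t > 2`, so along an orbit starting at `Re ζ > 2` the real part grows at least linearly.
-/

section OrbitEscape

variable {X : Type*} {f : X → X} {φ : X → ℝ} {h : ℝ → ℝ} {c : ℝ}

lemma lt_apply_of_add_le (hpos : ∀ t, c < t → 0 < h t)
    (hstep : ∀ x, c < φ x → φ x + h (φ x) ≤ φ (f x)) {x : X} (hx : c < φ x) :
    φ x < φ (f x) := by
  linarith [hpos _ hx, hstep x hx]

lemma add_mul_le_iterate_of_add_le (hpos : ∀ t, c < t → 0 < h t) (hmono : MonotoneOn h (Set.Ioi c))
    (hstep : ∀ x, c < φ x → φ x + h (φ x) ≤ φ (f x)) {x : X} (hx : c < φ x) (n : ℕ) :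
    φ x + n * h (φ x) ≤ φ (f^[n] x) := by
  induction n with
  | zero => simp
  | succ n ih =>
    have hn : φ x ≤ φ (f^[n] x) := by nlinarith [hpos _ hx, n.cast_nonneg (α := ℝ)]
    have hinc : h (φ x) ≤ h (φ (f^[n] x)) := hmono hx (lt_of_lt_of_le hx hn) hn
    rw [Function.iterate_succ_apply']
    push_cast
    linarith [hstep _ (lt_of_lt_of_le hx hn)]

lemma lt_iterate_of_add_le (hpos : ∀ t, c < t → 0 < h t) (hmono : MonotoneOn h (Set.Ioi c))
    (hstep : ∀ x, c < φ x → φ x + h (φ x) ≤ φ (f x)) {x : X} (hx : c < φ x) (n : ℕ) :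
    c < φ (f^[n] x) := by
  nlinarith [add_mul_le_iterate_of_add_le hpos hmono hstep hx n, hpos _ hx, n.cast_nonneg (α := ℝ)]

lemma tendsto_iterate_of_add_le (hpos : ∀ t, c < t → 0 < h t) (hmono : MonotoneOn h (Set.Ioi c))
    (hstep : ∀ x, c < φ x → φ x + h (φ x) ≤ φ (f x)) {x : X} (hx : c < φ x) :
    Tendsto (fun n : ℕ => φ (f^[n] x)) atTop atTop := by
  refine tendsto_atTop_mono (add_mul_le_iterate_of_add_le hpos hmono hstep hx) ?_
  exact tendsto_atTop_add_const_left _ _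
    (tendsto_natCast_atTop_atTop.atTop_mul_const (hpos _ hx))

end OrbitEscape

lemma re_sub_one_le_norm_one_add_mul {a : ℂ} (ha : 1 ≤ ‖a‖) (ζ : ℂ) :
    ζ.re - 1 ≤ ‖1 + a * ζ‖ := by
  have hζ : ‖ζ‖ ≤ ‖a * ζ‖ := by
    rw [norm_mul]
    exact le_mul_of_one_le_left (norm_nonneg ζ) ha
  have htri : ‖a * ζ‖ ≤ ‖1 + a * ζ‖ + 1 := by
    simpa using norm_sub_le (1 + a * ζ) 1
  linarith [re_le_norm ζ]

lemma re_add_one_sub_one_div_le_re {a : ℂ} (ha : 1 ≤ ‖a‖) {ζ : ℂ} (hζ : 1 < ζ.re) :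
    ζ.re + (1 - 1 / (ζ.re - 1)) ≤ (ζ + 1 - 1 / (1 + a * ζ)).re := by
  have hw := re_sub_one_le_norm_one_add_mul ha ζ
  have hinv : (1 / (1 + a * ζ)).re ≤ 1 / (ζ.re - 1) :=
    calc (1 / (1 + a * ζ)).re ≤ ‖1 / (1 + a * ζ)‖ := re_le_norm _
      _ = 1 / ‖1 + a * ζ‖ := by rw [norm_div, norm_one]
      _ ≤ 1 / (ζ.re - 1) := one_div_le_one_div_of_le (by linarith) hw
  have hre : (ζ + 1 - 1 / (1 + a * ζ)).re = ζ.re + 1 - (1 / (1 + a * ζ)).re := by simp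
  linarith

lemma one_sub_one_div_sub_one_pos {t : ℝ} (ht : 2 < t) : 0 < 1 - 1 / (t - 1) := by
  rw [sub_pos, div_lt_one] <;> linarith

lemma monotoneOn_one_sub_one_div_sub_one :
    MonotoneOn (fun t : ℝ => 1 - 1 / (t - 1)) (Set.Ioi 2) := by
  intro s hs t _ hst
  have hs : (2 : ℝ) < s := hs
  simp only
  linarith [one_div_le_one_div_of_le (by linarith : (0 : ℝ) < s - 1) (by linarith : s - 1 ≤ t - 1)]

theorem stmt10_general (lam : ℂ)
    (h1 : 1 < ‖lam - 1‖)
    (g : ℂ → ℂ) (hg : ∀ ζ, g ζ = ζ + 1 - 1 / (1 + (lam - 1) * ζ)) :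
    (∀ ζ : ℂ, 2 < ζ.re → ζ.re < (g ζ).re) ∧
    (∀ ζ : ℂ, 2 < ζ.re → ∀ n : ℕ, 2 < (g^[n] ζ).re) ∧
    (∀ ζ : ℂ, 2 < ζ.re → Tendsto (fun n : ℕ => (g^[n] ζ).re) atTop atTop) := by
  have hstep : ∀ ζ : ℂ, 2 < ζ.re → ζ.re + (1 - 1 / (ζ.re - 1)) ≤ (g ζ).re := fun ζ hζ =>
    hg ζ ▸ re_add_one_sub_one_div_le_re h1.le (by linarith)
  have hpos : ∀ t : ℝ, 2 < t → 0 < 1 - 1 / (t - 1) := fun _ => one_sub_one_div_sub_one_pos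
  have hmono := monotoneOn_one_sub_one_div_sub_one
  exact ⟨fun _ => lt_apply_of_add_le hpos hstep,
    fun _ hζ => lt_iterate_of_add_le hpos hmono hstep hζ,
    fun _ => tendsto_iterate_of_add_le hpos hmono hstep⟩

theorem stmt10 (lam : ℂ) (habs : ‖lam‖ = 1)
    (h1 : 1 < ‖lam - 1‖) (h2 : ‖lam - 1‖ ≤ 2)
    (g : ℂ → ℂ) (hg : ∀ ζ, g ζ = ζ + 1 - 1 / (1 + (lam - 1) * ζ)) :
    (∀ ζ : ℂ, 2 < ζ.re → ζ.re < (g ζ).re) ∧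
    (∀ ζ : ℂ, 2 < ζ.re → ∀ n : ℕ, 2 < (g^[n] ζ).re) ∧
    (∀ ζ : ℂ, 2 < ζ.re → Tendsto (fun n : ℕ => (g^[n] ζ).re) atTop atTop) :=
  stmt10_general lam h1 g hg
end

section
/- Let λ = e^{2πiθ} with θ ∈ (1/6, 5/6) of bounded type, g̃(ζ) = ζ + 1 - 1/(1+(λ-1)ζ), and c̃ = c₂/η where c₂ = -(1-√(1-λ))^{-1} and η = (λ-1)/λ. Then g̃(c̃) = 1 + 1/(1-λ) + 2√(1/(1-λ)), and consequently Re g̃(c̃) > 2, so the orbit of c̃ under g̃ converges to ∞. -/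
/-!
Writing `λ = 1 - s²` with `Re s > 0`, one has `c̃ = (1 + s)/s²` and `1 + (λ - 1)c̃ = -s`, so
`g̃(c̃) = 1 + 1/s² + 2/s`, and `w = 1/s` is the square root of `1/(1 - λ)` with positive real part.
For `|λ| = 1` the number `1/(1 - λ)` lies on the line `Re = 1/2`, so `(Re w)² ≥ Re w² = 1/2`
and `Re g̃(c̃) = 3/2 + 2 Re w > 5/2`. Since `Re λ < 1/2` gives `|λ - 1| > 1`, on `Re ζ ≥ 5/2` the
term `1/(1 + (λ - 1)ζ)` has modulus at most `2/3`, so each iterate moves right by at least `1/3`.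
-/

open Complex Filter

lemma Real.cos_lt_half {x : ℝ} (h₁ : Real.pi / 3 < x) (h₂ : x < 5 * Real.pi / 3) :
    Real.cos x < 1 / 2 := by
  rw [← Real.cos_pi_div_three]
  rcases le_total x Real.pi with h | h
  · exact Real.cos_lt_cos_of_nonneg_of_le_pi (by positivity) h h₁
  · rw [← Real.cos_two_pi_sub]
    exact Real.cos_lt_cos_of_nonneg_of_le_pi (by linarith [Real.pi_pos]) (by linarith) (by linarith)

namespace Complex

lemma normSq_sub_one_of_norm_eq_one {z : ℂ} (hz : ‖z‖ = 1) : normSq (z - 1) = 2 - 2 * z.re := by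
  have h : normSq z = 1 := by rw [normSq_eq_norm_sq, hz, one_pow]
  rw [normSq_sub, h]
  simp only [map_one, mul_one]
  ring

lemma one_lt_norm_sub_one {z : ℂ} (hz : ‖z‖ = 1) (hre : z.re < 1 / 2) : 1 < ‖z - 1‖ := by
  have h : 1 < ‖z - 1‖ ^ 2 := by
    rw [← normSq_eq_norm_sq, normSq_sub_one_of_norm_eq_one hz]
    linarith
  nlinarith [norm_nonneg (z - 1)]

lemma re_one_div_one_sub_of_norm_eq_one {z : ℂ} (hz : ‖z‖ = 1) (hz1 : z.re < 1) :
    (1 / (1 - z)).re = 1 / 2 := by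
  have hnormSq : normSq (1 - z) = 2 * (1 - z.re) := by
    rw [← normSq_neg, neg_sub, normSq_sub_one_of_norm_eq_one hz]
    ring
  rw [one_div, inv_re, hnormSq, sub_re, one_re]
  field_simp [sub_ne_zero.mpr hz1.ne']

lemma eq_of_sq_eq_sq_of_re_pos {a b : ℂ} (h : a ^ 2 = b ^ 2) (ha : 0 < a.re) (hb : 0 < b.re) :
    a = b := by
  refine (sq_eq_sq_iff_eq_or_eq_neg.mp h).resolve_right fun hab => ?_
  rw [hab, neg_re] at ha
  linarith

lemma re_inv_pos {z : ℂ} (hz : 0 < z.re) : 0 < z⁻¹.re := by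
  rw [inv_re]
  exact div_pos hz (normSq_pos.mpr fun h => by simp [h] at hz)

lemma half_lt_re_of_re_sq {w : ℂ} (hw : (w ^ 2).re = 1 / 2) (hwre : 0 < w.re) : 1 / 2 < w.re := by
  rw [sq, mul_re] at hw
  nlinarith [sq_nonneg w.im]

lemma critical_value_eq {lam s ζ : ℂ} (hs : s ^ 2 = 1 - lam) (hlam : lam ≠ 0) (hs0 : s ≠ 0)
    (hζ : ζ = -(1 - s)⁻¹ / ((lam - 1) / lam)) :
    ζ + 1 - 1 / (1 + (lam - 1) * ζ) = 1 + 1 / (1 - lam) + 2 / s := by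
  have hlam' : lam = 1 - s ^ 2 := by linear_combination hs
  have hs1 : 1 - s ≠ 0 := fun h => hlam (by rw [hlam', show s = 1 by linear_combination -h]; ring)
  have hζ' : ζ = (1 + s) / s ^ 2 := by
    rw [hζ, hlam']
    field_simp
    ring
  have hden : 1 + (lam - 1) * ζ = -s := by
    rw [hζ', hlam']
    field_simp
    ring
  rw [hden, hζ', ← hs]
  field_simp
  ring

lemma re_add_third_le_re_add_one_sub_inv {c ζ : ℂ} (hc : 1 ≤ ‖c‖) (hζ : 5 / 2 ≤ ζ.re) :
    ζ.re + 1 / 3 ≤ (ζ + 1 - 1 / (1 + c * ζ)).re := by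
  have hcζ : 5 / 2 ≤ ‖c * ζ‖ := by
    rw [norm_mul]
    nlinarith [re_le_norm ζ]
  have hu : 3 / 2 ≤ ‖1 + c * ζ‖ := by
    have := norm_sub_norm_le (c * ζ) (-1)
    rw [sub_neg_eq_add, add_comm, norm_neg, norm_one] at this
    linarith
  have hinv : (1 / (1 + c * ζ)).re ≤ 2 / 3 :=
    calc (1 / (1 + c * ζ)).re ≤ ‖1 / (1 + c * ζ)‖ := re_le_norm _
      _ = 1 / ‖1 + c * ζ‖ := by rw [norm_div, norm_one]
      _ ≤ 1 / (3 / 2) := one_div_le_one_div_of_le (by norm_num) hu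
      _ = 2 / 3 := by norm_num
  rw [sub_re, add_re, one_re]
  linarith

lemma tendsto_norm_iterate_of_re_le_re {f : ℂ → ℂ} {R δ : ℝ} (hδ : 0 < δ)
    (hf : ∀ ζ, R ≤ ζ.re → ζ.re + δ ≤ (f ζ).re) {z : ℂ} (hz : R ≤ z.re) :
    Tendsto (fun n : ℕ => ‖f^[n] z‖) atTop atTop := by
  have hre : ∀ n : ℕ, z.re + n * δ ≤ (f^[n] z).re := by
    intro n
    induction n with
    | zero => simp
    | succ n ih =>
      rw [Function.iterate_succ_apply']
      have := hf _ (by nlinarith [n.cast_nonneg (α := ℝ)])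
      push_cast
      linarith
  refine tendsto_atTop_mono (fun n => (hre n).trans (re_le_norm _)) ?_
  exact tendsto_atTop_add_const_left _ _ (tendsto_natCast_atTop_atTop.atTop_mul_const hδ)

end Complex

theorem stmt13_general (θ : ℝ) (hθ1 : 1 / 6 < θ) (hθ2 : θ < 5 / 6)
    (lam : ℂ) (hlam : lam = Complex.exp (2 * Real.pi * Complex.I * θ))
    (s : ℂ) (hs : s ^ 2 = 1 - lam) (hsre : 0 < s.re)
    (w : ℂ) (hw : w ^ 2 = 1 / (1 - lam)) (hwre : 0 < w.re)
    (η : ℂ) (hη : η = (lam - 1) / lam)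
    (c2 : ℂ) (hc2 : c2 = -(1 - s)⁻¹)
    (ctil : ℂ) (hctil : ctil = c2 / η)
    (g : ℂ → ℂ) (hg : ∀ ζ, g ζ = ζ + 1 - 1 / (1 + (lam - 1) * ζ)) :
    g ctil = 1 + 1 / (1 - lam) + 2 * w ∧
    2 < (g ctil).re ∧
    Tendsto (fun n : ℕ => ‖g^[n] ctil‖) atTop atTop := by
  have hlam' : lam = exp ((2 * Real.pi * θ : ℝ) * I) := by rw [hlam]; push_cast; ring_nf
  have hnorm : ‖lam‖ = 1 := by rw [hlam']; exact norm_exp_ofReal_mul_I _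
  have hre : lam.re < 1 / 2 := by
    rw [hlam', exp_ofReal_mul_I_re]
    exact Real.cos_lt_half (by nlinarith [Real.pi_pos]) (by nlinarith [Real.pi_pos])
  have hlam0 : lam ≠ 0 := fun h => by simp [h] at hnorm
  have hs0 : s ≠ 0 := fun h => by simp [h] at hsre
  have hws : w = 1 / s := by
    refine eq_of_sq_eq_sq_of_re_pos ?_ hwre (by simpa using re_inv_pos hsre)
    rw [hw, div_pow, one_pow, hs]
  have hvalue : g ctil = 1 + 1 / (1 - lam) + 2 * w := by
    rw [hg, critical_value_eq hs hlam0 hs0 (by rw [hctil, hc2, hη]), hws, mul_one_div]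
  have hgre : 5 / 2 < (g ctil).re := by
    have hhalf := re_one_div_one_sub_of_norm_eq_one hnorm (by linarith)
    have hw_half := half_lt_re_of_re_sq (by rw [hw, hhalf]) hwre
    rw [hvalue]
    simp only [add_re, one_re, hhalf, mul_re, re_ofNat, im_ofNat]
    linarith
  have hstep : ∀ ζ : ℂ, 5 / 2 ≤ ζ.re → ζ.re + 1 / 3 ≤ (g ζ).re := fun ζ hζ => by
    rw [hg]
    exact re_add_third_le_re_add_one_sub_inv (one_lt_norm_sub_one hnorm hre).le hζ
  refine ⟨hvalue, by linarith, (tendsto_add_atTop_iff_nat 1).mp ?_⟩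
  simpa only [Function.iterate_succ_apply] using
    tendsto_norm_iterate_of_re_le_re (by norm_num) hstep hgre.le

theorem stmt13 (θ : ℝ) (hθ : Irrational θ) (hθ1 : 1 / 6 < θ) (hθ2 : θ < 5 / 6)
    (lam : ℂ) (hlam : lam = Complex.exp (2 * Real.pi * Complex.I * θ))
    (s : ℂ) (hs : s ^ 2 = 1 - lam) (hsre : 0 < s.re)
    (w : ℂ) (hw : w ^ 2 = 1 / (1 - lam)) (hwre : 0 < w.re)
    (η : ℂ) (hη : η = (lam - 1) / lam)
    (c2 : ℂ) (hc2 : c2 = -(1 - s)⁻¹)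
    (ctil : ℂ) (hctil : ctil = c2 / η)
    (g : ℂ → ℂ) (hg : ∀ ζ, g ζ = ζ + 1 - 1 / (1 + (lam - 1) * ζ)) :
    g ctil = 1 + 1 / (1 - lam) + 2 * w ∧
    2 < (g ctil).re ∧
    Tendsto (fun n : ℕ => ‖g^[n] ctil‖) atTop atTop :=
  stmt13_general θ hθ1 hθ2 lam hlam s hs hsre w hw hwre η hη c2 hc2 ctil hctil g hg
end
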